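/- arXiv:2504.06197 — 6 statements merged into one kernel-verified Lean document; each statement's English description precedes it below -/
import Mathlib

section
/- Suppose that for every N ≥ 0 the Gram matrix (⟨z^n, z^m⟩)_{0 ≤ n,m ≤ N} is invertible, and let (P_n)_{n≥0} be a sequence of orthogonal polynomials for the pairing. Then, with ζ = exp(2πi/3), for every n ≥ 0 one has P_n(ζ·z) = ζ^n · P_n(z) as polynomials. -/
/-!
The density is invariant under `z ↦ ζ z`, because `|ζ z| = |z|` and `(ζ z)³ = z³`, and so is the
pairing; hence `n ↦ P n ∘ (ζ X)` is again an orthogonal sequence, whose `n`-th term has leading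
coefficient `ζ ^ n`. Invertible Gram matrices make orthogonal sequences unique up to scaling each
term: if two `n`-th terms are normalised to the same leading coefficient, their difference has
degree `< n` and is orthogonal to `1, X, …, X ^ (n - 1)`, so its conjugated coefficient vector lies
in the kernel of the `n × n` Gram matrix.
-/

open MeasureTheory Polynomial Complex

/-- The density `exp(-a|z|² + i t (z³ + conj(z)³))`. -/
noncomputable def cubicDensity (a t : ℝ) (z : ℂ) : ℂ :=
  Complex.exp (-(a : ℂ) * (‖z‖ : ℂ) ^ 2 +
    Complex.I * (t : ℂ) * (z ^ 3 + (starRingEnd ℂ) z ^ 3))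

/-- The pairing `⟨f,g⟩ = ∫_ℂ f(z) conj(g(-z)) exp(-a|z|² + i t (z³ + conj(z)³)) dx dy`. -/
noncomputable def cubicPairing (a t : ℝ) (f g : Polynomial ℂ) : ℂ :=
  ∫ z : ℂ, f.eval z * (starRingEnd ℂ) (g.eval (-z)) * cubicDensity a t z

theorem Polynomial.degree_comp_C_mul_X {R : Type*} [Semiring R] [NoZeroDivisors R] {ζ : R}
    (hζ : ζ ≠ 0) (p : R[X]) :
    (p.comp (C ζ * X)).degree = p.degree := by
  have hsupp : (p.comp (C ζ * X)).support = p.support := by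
    ext n
    simp [pow_ne_zero n hζ]
  simp only [degree, hsupp]

theorem Polynomial.leadingCoeff_comp_C_mul_X {R : Type*} [Semiring R] [NoZeroDivisors R] {ζ : R}
    (hζ : ζ ≠ 0) (p : R[X]) :
    (p.comp (C ζ * X)).leadingCoeff = p.leadingCoeff * ζ ^ p.natDegree := by
  rw [leadingCoeff, natDegree_eq_natDegree (degree_comp_C_mul_X hζ p), comp_C_mul_X_coeff,
    leadingCoeff]

section OrthogonalSeq

variable {K : Type*} [Field K] {σ : K →+* K}

noncomputable def gramMatrix (B : K[X] →ₗ[K] K[X] →ₛₗ[σ] K) (n : ℕ) : Matrix (Fin n) (Fin n) K :=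
  Matrix.of fun i j => B (X ^ (i : ℕ)) (X ^ (j : ℕ))

def IsOrthogonalSeq (B : K[X] →ₗ[K] K[X] →ₛₗ[σ] K) (P : ℕ → K[X]) : Prop :=
  (∀ n, (P n).degree = n) ∧ Pairwise fun n m => B (P n) (P m) = 0

variable {B : K[X] →ₗ[K] K[X] →ₛₗ[σ] K} {P Q : ℕ → K[X]}

theorem IsOrthogonalSeq.ne_zero (hP : IsOrthogonalSeq B P) (n : ℕ) : P n ≠ 0 := by
  intro h
  simpa [h] using hP.1 n

theorem IsOrthogonalSeq.apply_eq_zero_of_degree_lt (hP : IsOrthogonalSeq B P) {n : ℕ}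
    {f : K[X]} (hf : f.degree < n) : B f (P n) = 0 := by
  suffices ∀ j ≤ n, ∀ f : K[X], f.degree < j → B f (P n) = 0 from this n le_rfl f hf
  intro j
  induction j with
  | zero =>
    intro _ f hf
    rw [show f = 0 by simpa using hf, map_zero, LinearMap.zero_apply]
  | succ j ih =>
    intro hjn f hf
    have hPj : (P j).natDegree = j := natDegree_eq_of_degree_eq_some (hP.1 j)
    have hlc : (P j).leadingCoeff ≠ 0 := leadingCoeff_ne_zero.2 (hP.ne_zero j)
    set c := f.coeff j / (P j).leadingCoeff
    have hlower : (f - c • P j).degree < j := by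
      refine (degree_lt_iff_coeff_zero _ _).2 fun m hm => ?_
      rw [coeff_sub, coeff_smul, smul_eq_mul]
      rcases hm.eq_or_lt with rfl | hm
      · rw [show (P j).coeff j = (P j).leadingCoeff by rw [leadingCoeff, hPj],
          div_mul_cancel₀ _ hlc, sub_self]
      · rw [(degree_lt_iff_coeff_zero f _).1 hf m hm,
          coeff_eq_zero_of_natDegree_lt (by rwa [hPj]), mul_zero, sub_zero]
    calc B f (P n) = B (f - c • P j) (P n) + c • B (P j) (P n) := by
          rw [map_sub, map_smul, LinearMap.sub_apply, LinearMap.smul_apply, sub_add_cancel]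
      _ = 0 := by rw [ih (by omega) _ hlower, hP.2 (by omega : j ≠ n), smul_zero, add_zero]

theorem eq_zero_of_det_gramMatrix_ne_zero {n : ℕ} (hG : (gramMatrix B n).det ≠ 0) {D : K[X]}
    (hD : D.degree < n) (hBD : ∀ j < n, B (X ^ j) D = 0) : D = 0 := by
  have hcoeff : (fun k : Fin n => σ (D.coeff k)) = 0 := by
    refine Matrix.eq_zero_of_mulVec_eq_zero hG (funext fun i => ?_)
    have hsum : D = ∑ k : Fin n, D.coeff k • X ^ (k : ℕ) := by
      simp_rw [smul_eq_C_mul]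
      rw [sum_fin (fun k a => C a * X ^ k) (by simp) hD, sum_C_mul_X_pow_eq]
    rw [Pi.zero_apply, ← hBD i i.2]
    conv_rhs => rw [hsum]
    simp [Matrix.mulVec, dotProduct, gramMatrix, mul_comm]
  ext k
  rcases lt_or_ge k n with hk | hk
  · simpa using congrFun hcoeff ⟨k, hk⟩
  · exact (degree_lt_iff_coeff_zero D n).1 hD k hk

theorem IsOrthogonalSeq.C_leadingCoeff_mul_eq (hP : IsOrthogonalSeq B P)
    (hQ : IsOrthogonalSeq B Q) (hG : ∀ n, (gramMatrix B n).det ≠ 0) (n : ℕ) :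
    C (P n).leadingCoeff * Q n = C (Q n).leadingCoeff * P n := by
  have hPlc := leadingCoeff_ne_zero.2 (hP.ne_zero n)
  have hQlc := leadingCoeff_ne_zero.2 (hQ.ne_zero n)
  refine sub_eq_zero.1 (eq_zero_of_det_gramMatrix_ne_zero (hG n) ?_ fun j hj => ?_)
  · calc _ < (C (P n).leadingCoeff * Q n).degree := by
          refine degree_sub_lt_left ?_ (mul_ne_zero (C_ne_zero.2 hPlc) (hQ.ne_zero n)) ?_
          · rw [degree_C_mul hPlc, degree_C_mul hQlc, hP.1, hQ.1]
          · simp only [leadingCoeff_mul, leadingCoeff_C, mul_comm]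
      _ = n := by rw [degree_C_mul hPlc, hQ.1]
  · have hXj : (X ^ j : K[X]).degree < n := by rwa [degree_X_pow, Nat.cast_lt]
    simp only [← smul_eq_C_mul, map_sub, map_smulₛₗ, hP.apply_eq_zero_of_degree_lt hXj,
      hQ.apply_eq_zero_of_degree_lt hXj, smul_zero, sub_self]

theorem IsOrthogonalSeq.comp_C_mul_X (hP : IsOrthogonalSeq B P) {ζ : K} (hζ : ζ ≠ 0)
    (hB : ∀ f g, B (f.comp (C ζ * X)) (g.comp (C ζ * X)) = B f g) :
    IsOrthogonalSeq B fun n => (P n).comp (C ζ * X) :=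
  ⟨fun n => (degree_comp_C_mul_X hζ _).trans (hP.1 n), fun _ _ hnm => (hB _ _).trans (hP.2 hnm)⟩

end OrthogonalSeq

theorem norm_cubicDensity (a t : ℝ) (z : ℂ) :
    ‖cubicDensity a t z‖ = Real.exp (-a * ‖z‖ ^ 2) := by
  have him : ((starRingEnd ℂ) z ^ 3).im = -(z ^ 3).im := by rw [← map_pow, conj_im]
  have hre : (((‖z‖ : ℝ) : ℂ) ^ 2).re = ‖z‖ ^ 2 := by rw [← ofReal_pow, ofReal_re]
  rw [cubicDensity, norm_exp]
  simp [mul_re, him, hre]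

theorem cubicDensity_mul_left {ζ : ℂ} (hζ : ζ ^ 3 = 1) (a t : ℝ) (z : ℂ) :
    cubicDensity a t (ζ * z) = cubicDensity a t z := by
  have hnorm : ‖ζ‖ = 1 := norm_eq_one_of_pow_eq_one hζ (by norm_num)
  simp only [cubicDensity, norm_mul, hnorm, one_mul, map_mul, mul_pow, ← map_pow, hζ, map_one]

@[fun_prop]
theorem continuous_cubicDensity (a t : ℝ) : Continuous (cubicDensity a t) := by
  unfold cubicDensity
  fun_prop

theorem Real.pow_le_mul_exp_mul_sq {c x : ℝ} (hc : 0 < c) (hx : 0 ≤ x) (n : ℕ) :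
    x ^ n ≤ (1 + n.factorial / c ^ n) * Real.exp (c * x ^ 2) := by
  have hexp : 1 ≤ Real.exp (c * x ^ 2) := Real.one_le_exp (by positivity)
  have hsq : x ^ (2 * n) ≤ n.factorial / c ^ n * Real.exp (c * x ^ 2) := by
    have h := Real.pow_div_factorial_le_exp (x := c * x ^ 2) (by positivity) n
    rw [div_le_iff₀ (by positivity)] at h
    rw [div_mul_eq_mul_div, le_div_iff₀ (by positivity)]
    calc x ^ (2 * n) * c ^ n = (c * x ^ 2) ^ n := by ring
      _ ≤ _ := by linarith
  calc x ^ n ≤ 1 + x ^ (2 * n) := by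
        rcases le_total x 1 with h | h
        · linarith [pow_le_one₀ hx h (n := n), pow_nonneg hx (2 * n)]
        · linarith [pow_le_pow_right₀ h (by omega : n ≤ 2 * n)]
    _ ≤ Real.exp (c * x ^ 2) + n.factorial / c ^ n * Real.exp (c * x ^ 2) := add_le_add hexp hsq
    _ = _ := by ring

theorem Polynomial.exists_norm_eval_le_mul_exp {𝕜 : Type*} [NormedField 𝕜] {c : ℝ} (hc : 0 < c)
    (p : 𝕜[X]) : ∃ M, ∀ z : 𝕜, ‖p.eval z‖ ≤ M * Real.exp (c * ‖z‖ ^ 2) := by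
  induction p using Polynomial.induction_on' with
  | add p q hp hq =>
    obtain ⟨M₁, h₁⟩ := hp
    obtain ⟨M₂, h₂⟩ := hq
    refine ⟨M₁ + M₂, fun z => ?_⟩
    rw [eval_add, add_mul]
    exact (norm_add_le _ _).trans (add_le_add (h₁ z) (h₂ z))
  | monomial n b =>
    refine ⟨‖b‖ * (1 + n.factorial / c ^ n), fun z => ?_⟩
    rw [eval_monomial, norm_mul, norm_pow, mul_assoc]
    exact mul_le_mul_of_nonneg_left (Real.pow_le_mul_exp_mul_sq hc (norm_nonneg z) n)
      (norm_nonneg b)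

theorem integrable_exp_neg_mul_norm_sq {V : Type*} [NormedAddCommGroup V] [InnerProductSpace ℝ V]
    [FiniteDimensional ℝ V] [MeasurableSpace V] [BorelSpace V] {b : ℝ} (hb : 0 < b) :
    Integrable fun v : V => Real.exp (-b * ‖v‖ ^ 2) := by
  have h := (GaussianFourier.integrable_cexp_neg_mul_sq_norm_add (V := V)
    (b := (b : ℂ)) (by simpa using hb) 0 0).norm
  refine h.congr (Filter.Eventually.of_forall fun v => ?_)
  simp [norm_exp, ← ofReal_pow]

theorem integrable_cubicPairing_integrand {a : ℝ} (ha : 0 < a) (t : ℝ) (f g : ℂ[X]) :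
    Integrable fun z : ℂ => f.eval z * (starRingEnd ℂ) (g.eval (-z)) * cubicDensity a t z := by
  obtain ⟨M₁, h₁⟩ := f.exists_norm_eval_le_mul_exp (c := a / 4) (by positivity)
  obtain ⟨M₂, h₂⟩ := g.exists_norm_eval_le_mul_exp (c := a / 4) (by positivity)
  refine ((integrable_exp_neg_mul_norm_sq (b := a / 2) (by positivity)).const_mul
    (M₁ * M₂)).mono' (by fun_prop : Continuous _).aestronglyMeasurable
    (Filter.Eventually.of_forall fun z => ?_)
  have hexp : Real.exp (a / 4 * ‖z‖ ^ 2) * Real.exp (a / 4 * ‖z‖ ^ 2) * Real.exp (-a * ‖z‖ ^ 2)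
      = Real.exp (-(a / 2) * ‖z‖ ^ 2) := by
    rw [← Real.exp_add, ← Real.exp_add]
    ring_nf
  rw [norm_mul, norm_mul, norm_cubicDensity, RCLike.norm_conj]
  calc ‖f.eval z‖ * ‖g.eval (-z)‖ * Real.exp (-a * ‖z‖ ^ 2)
      ≤ (M₁ * Real.exp (a / 4 * ‖z‖ ^ 2)) * (M₂ * Real.exp (a / 4 * ‖z‖ ^ 2))
          * Real.exp (-a * ‖z‖ ^ 2) := by
        gcongr
        · exact (norm_nonneg _).trans (h₁ z)
        · exact h₁ z
        · simpa using h₂ (-z)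
    _ = M₁ * M₂ * Real.exp (-(a / 2) * ‖z‖ ^ 2) := by rw [← hexp]; ring

theorem cubicPairing_add_left {a : ℝ} (ha : 0 < a) (t : ℝ) (f₁ f₂ g : ℂ[X]) :
    cubicPairing a t (f₁ + f₂) g = cubicPairing a t f₁ g + cubicPairing a t f₂ g := by
  rw [cubicPairing, cubicPairing, cubicPairing, ← integral_add
    (integrable_cubicPairing_integrand ha t f₁ g) (integrable_cubicPairing_integrand ha t f₂ g)]
  simp only [eval_add, add_mul]

theorem cubicPairing_add_right {a : ℝ} (ha : 0 < a) (t : ℝ) (f g₁ g₂ : ℂ[X]) :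
    cubicPairing a t f (g₁ + g₂) = cubicPairing a t f g₁ + cubicPairing a t f g₂ := by
  rw [cubicPairing, cubicPairing, cubicPairing, ← integral_add
    (integrable_cubicPairing_integrand ha t f g₁) (integrable_cubicPairing_integrand ha t f g₂)]
  simp only [eval_add, map_add, mul_add, add_mul]

theorem cubicPairing_smul_left (a t : ℝ) (c : ℂ) (f g : ℂ[X]) :
    cubicPairing a t (c • f) g = c * cubicPairing a t f g := by
  rw [cubicPairing, cubicPairing, ← integral_const_mul]
  simp only [eval_smul, smul_eq_mul, mul_assoc]

theorem cubicPairing_smul_right (a t : ℝ) (c : ℂ) (f g : ℂ[X]) :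
    cubicPairing a t f (c • g) = starRingEnd ℂ c * cubicPairing a t f g := by
  rw [cubicPairing, cubicPairing, ← integral_const_mul]
  congr 1
  ext z
  simp only [eval_smul, smul_eq_mul, map_mul]
  ring

noncomputable def cubicForm {a : ℝ} (ha : 0 < a) (t : ℝ) : ℂ[X] →ₗ[ℂ] ℂ[X] →ₗ⋆[ℂ] ℂ :=
  LinearMap.mk₂'ₛₗ _ _ (cubicPairing a t) (cubicPairing_add_left ha t)
    (cubicPairing_smul_left a t) (cubicPairing_add_right ha t) (cubicPairing_smul_right a t)

theorem cubicPairing_comp_C_mul_X {ζ : ℂ} (hζ : ζ ^ 3 = 1) (a t : ℝ) (f g : ℂ[X]) :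
    cubicPairing a t (f.comp (C ζ * X)) (g.comp (C ζ * X)) = cubicPairing a t f g := by
  let u : Circle := ⟨ζ, mem_sphere_zero_iff_norm.2 (norm_eq_one_of_pow_eq_one hζ (by norm_num))⟩
  rw [cubicPairing, cubicPairing]
  conv_rhs => rw [← integral_comp (rotation u)]
  have hu : (u : ℂ) = ζ := rfl
  simp only [eval_comp, eval_mul, eval_C, eval_X, rotation_apply, hu, cubicDensity_mul_left hζ,
    mul_neg]

theorem stmt_1 (a t : ℝ) (ha : 0 < a)
    (hGram : ∀ N : ℕ, (Matrix.of fun n m : Fin (N + 1) =>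
      cubicPairing a t (X ^ (n : ℕ)) (X ^ (m : ℕ))).det ≠ 0)
    (P : ℕ → Polynomial ℂ)
    (hmonic : ∀ n, (P n).Monic ∧ (P n).natDegree = n)
    (horth : ∀ n m, n ≠ m → cubicPairing a t (P n) (P m) = 0) :
    ∀ n : ℕ, (P n).comp (C (Complex.exp (2 * Real.pi * Complex.I / 3)) * X) =
      C (Complex.exp (2 * Real.pi * Complex.I / 3) ^ n) * P n := by
  set ζ := Complex.exp (2 * Real.pi * Complex.I / 3)
  have hζ : ζ ^ 3 = 1 := by
    rw [← Complex.exp_nat_mul, ← Complex.exp_two_pi_mul_I]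
    congr 1
    push_cast
    ring
  have hζ0 : ζ ≠ 0 := Complex.exp_ne_zero _
  have hP : IsOrthogonalSeq (cubicForm ha t) P :=
    ⟨fun n => by rw [degree_eq_natDegree (hmonic n).1.ne_zero, (hmonic n).2], horth⟩
  have hQ := hP.comp_C_mul_X hζ0 (cubicPairing_comp_C_mul_X hζ a t)
  have hG : ∀ n, (gramMatrix (cubicForm ha t) n).det ≠ 0
    | 0 => by simp
    | N + 1 => hGram N
  intro n
  simpa [(hmonic n).1.leadingCoeff, leadingCoeff_comp_C_mul_X hζ0, (hmonic n).2] using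
    hP.C_leadingCoeff_mul_eq hQ hG n
end

section
/- Let d ≥ 1 and let ρ satisfy conditions (I) and (II). Fix ε ∈ ℂ with ε^d = −1 and define the pairing ⟨f,g⟩ = ∫_ℂ f(z)·conj(σg(z))·ρ(z) dx dy, where σg(z) = Σ_{ℓ=0}^{d−1} (−ε)^{−ℓ}·g_ℓ(ε·z). Then for all complex polynomials f and g one has ⟨f,g⟩ = conj(⟨g,f⟩); in particular ⟨f,f⟩ is real for every polynomial f. -/
open MeasureTheory Polynomial Complex

/-- The weight-`ℓ` component (mod `d`) of a polynomial: the sum of its monomials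
whose degree is congruent to `ℓ` mod `d`. -/
noncomputable def weightComp (d ℓ : ℕ) (f : Polynomial ℂ) : Polynomial ℂ :=
  ∑ k ∈ f.support.filter (fun k => k % d = ℓ), Polynomial.monomial k (f.coeff k)

/-- A polynomial has weight `ℓ` (mod `d`) if all its monomials have degree `≡ ℓ [MOD d]`. -/
def HasWeight (d ℓ : ℕ) (f : Polynomial ℂ) : Prop :=
  ∀ k ∈ f.support, k % d = ℓ

/-- `σg(z) = Σ_{ℓ=0}^{d-1} (-ε)^{-ℓ} g_ℓ(ε z)`. -/
noncomputable def sigmaMap (d : ℕ) (ε : ℂ) (g : Polynomial ℂ) (z : ℂ) : ℂ :=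
  ∑ ℓ ∈ Finset.range d, (-ε) ^ (-(ℓ : ℤ)) * (weightComp d ℓ g).eval (ε * z)

/-- The pairing `⟨f,g⟩ = ∫_ℂ f(z) conj(σg(z)) ρ(z) dx dy`. -/
noncomputable def genPairing (d : ℕ) (ε : ℂ) (ρ : ℂ → ℂ) (f g : Polynomial ℂ) : ℂ :=
  ∫ z : ℂ, f.eval z * (starRingEnd ℂ) (sigmaMap d ε g z) * ρ z

/-- Condition (I): `ρ` is measurable and `∫_ℂ |z|^n |ρ(z)| dx dy < ∞` for all `n`. -/
def CondI (ρ : ℂ → ℂ) : Prop :=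
  Measurable ρ ∧
  ∀ n : ℕ, MeasureTheory.Integrable (fun z : ℂ => ‖z‖ ^ n * ‖ρ z‖)

/-- Condition (II): `ρ(ε z) = conj(ρ(z))` for every `ε` with `ε^d = -1`. -/
def CondII (d : ℕ) (ρ : ℂ → ℂ) : Prop :=
  ∀ ε : ℂ, ε ^ d = -1 → ∀ z : ℂ, ρ (ε * z) = (starRingEnd ℂ) (ρ z)

/-! Expanding both polynomials into monomials writes `⟨f, g⟩` as a finite combination of the
mixed moments `M(k, j) = ∫ zᵏ z̄ʲ ρ(z)`. Applying (II) twice, `ρ` is invariant under rotation by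
the primitive `d`-th root of unity `exp(2πi/d)`, so `M(k, j) = 0` unless `k ≡ j (mod d)`.
Applying (II) once and rotating by `ε` gives `conj M(j, k) = ε̄ᵏ εʲ M(k, j)`, and on the surviving
terms the factors `(-ε)^{-ℓ}` in `σ` are exactly what makes the two sides agree, because
`ε^{2d} = 1`. -/

open ComplexConjugate

noncomputable def mixedMoment (ρ : ℂ → ℂ) (k j : ℕ) : ℂ :=
  ∫ z : ℂ, z ^ k * conj z ^ j * ρ z

/-- The coefficient by which `σ` multiplies the monomial `zʲ`. -/
noncomputable def sigmaCoeff (d : ℕ) (ε : ℂ) (j : ℕ) : ℂ :=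
  (-ε) ^ (-((j % d : ℕ) : ℤ)) * ε ^ j

section Rotation

variable {c : ℂ}

lemma integral_comp_mul_of_norm_eq_one {E : Type*} [NormedAddCommGroup E] [NormedSpace ℝ E]
    (hc : ‖c‖ = 1) (F : ℂ → E) : ∫ z : ℂ, F (c * z) = ∫ z : ℂ, F z :=
  let a : Circle := ⟨c, by simp [Submonoid.unitSphere, hc]⟩
  (rotation a).measurePreserving.integral_comp (rotation a).toHomeomorph.measurableEmbedding F

lemma mixedMoment_comp_mul (hc : ‖c‖ = 1) (ρ : ℂ → ℂ) (k j : ℕ) :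
    mixedMoment (fun z => ρ (c * z)) k j = conj c ^ k * c ^ j * mixedMoment ρ k j := by
  have hcc : ∀ z : ℂ, c * (conj c * z) = z := fun z => by
    rw [← mul_assoc, mul_conj, normSq_eq_norm_sq, hc]; simp
  rw [mixedMoment, ← integral_comp_mul_of_norm_eq_one (c := conj c) (by simpa using hc),
    mixedMoment, ← integral_const_mul]
  congr 1 with z
  simp only [hcc, map_mul, conj_conj, mul_pow]
  ring

lemma mixedMoment_eq_zero_of_not_modEq {d : ℕ} (hd : d ≠ 0) (hc : IsPrimitiveRoot c d)
    {ρ : ℂ → ℂ} (hρ : ∀ z, ρ (c * z) = ρ z) {k j : ℕ} (hkj : ¬ k ≡ j [MOD d]) :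
    mixedMoment ρ k j = 0 := by
  have hc1 : ‖c‖ = 1 := hc.norm'_eq_one hd
  have hc0 : c ≠ 0 := hc.ne_zero hd
  have hfix : mixedMoment ρ k j = c⁻¹ ^ k * c ^ j * mixedMoment ρ k j := by
    simpa only [hρ, ← inv_eq_conj hc1] using mixedMoment_comp_mul hc1 ρ k j
  by_contra hM
  have hpow : c⁻¹ ^ k * c ^ j = 1 := mul_right_cancel₀ hM (by rw [one_mul]; exact hfix.symm)
  rw [inv_pow, inv_mul_eq_one₀ (pow_ne_zero _ hc0)] at hpow
  rw [(hc.isOfFinOrder hd).pow_eq_pow_iff_modEq, ← hc.eq_orderOf] at hpow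
  exact hkj hpow

end Rotation

lemma conj_mixedMoment (ρ : ℂ → ℂ) (j k : ℕ) :
    conj (mixedMoment ρ j k) = mixedMoment (fun z => conj (ρ z)) k j := by
  rw [mixedMoment, ← integral_conj, mixedMoment]
  congr 1 with z
  simp only [map_mul, map_pow, conj_conj]
  ring

lemma integrable_pow_mul_conj_pow_mul {ρ : ℂ → ℂ} (hI : CondI ρ) (k j : ℕ) :
    Integrable (fun z : ℂ => z ^ k * conj z ^ j * ρ z) := by
  refine (hI.2 (k + j)).mono' (by have := hI.1; fun_prop) (.of_forall fun z => le_of_eq ?_)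
  simp only [norm_mul, norm_pow, norm_conj, pow_add]

lemma integral_eval_mul_conj_sum_mul {ρ : ℂ → ℂ} (hI : CondI ρ) (f : ℂ[X]) (s : Finset ℕ)
    (b : ℕ → ℂ) :
    ∫ z : ℂ, f.eval z * conj (∑ j ∈ s, b j * z ^ j) * ρ z
      = ∑ k ∈ f.support, ∑ j ∈ s, f.coeff k * conj (b j) * mixedMoment ρ k j := by
  have hexpand : ∀ z : ℂ, f.eval z * conj (∑ j ∈ s, b j * z ^ j) * ρ z
      = ∑ k ∈ f.support, ∑ j ∈ s,
          f.coeff k * conj (b j) * (z ^ k * conj z ^ j * ρ z) := fun z => by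
    rw [eval_eq_sum, sum_def, map_sum, Finset.sum_mul_sum, Finset.sum_mul]
    refine Finset.sum_congr rfl fun k _ => ?_
    rw [Finset.sum_mul]
    refine Finset.sum_congr rfl fun j _ => ?_
    simp only [map_mul, map_pow]
    ring
  have hint := fun k j => (integrable_pow_mul_conj_pow_mul hI k j).const_mul
  simp_rw [hexpand]
  rw [integral_finsetSum _ fun k _ => integrable_finsetSum _ fun j _ => hint k j _]
  refine Finset.sum_congr rfl fun k _ => ?_
  rw [integral_finsetSum _ fun j _ => hint k j _]
  exact Finset.sum_congr rfl fun j _ => integral_const_mul _ _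

lemma sigmaMap_eq_sum {d : ℕ} (hd : d ≠ 0) (ε : ℂ) (g : ℂ[X]) (z : ℂ) :
    sigmaMap d ε g z = ∑ j ∈ g.support, sigmaCoeff d ε j * g.coeff j * z ^ j := by
  calc sigmaMap d ε g z
      = ∑ ℓ ∈ Finset.range d, ∑ j ∈ g.support with j % d = ℓ,
          sigmaCoeff d ε j * g.coeff j * z ^ j := by
        refine Finset.sum_congr rfl fun ℓ _ => ?_
        rw [weightComp, eval_finsetSum, Finset.mul_sum]
        refine Finset.sum_congr rfl fun j hj => ?_
        rw [eval_monomial, ← (Finset.mem_filter.mp hj).2, sigmaCoeff]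
        ring
    _ = _ := Finset.sum_fiberwise_of_maps_to
        (fun j _ => Finset.mem_range.mpr (Nat.mod_lt j (Nat.pos_of_ne_zero hd))) _

lemma genPairing_eq_sum {d : ℕ} (hd : d ≠ 0) (ε : ℂ) {ρ : ℂ → ℂ} (hI : CondI ρ)
    (f g : ℂ[X]) :
    genPairing d ε ρ f g = ∑ k ∈ f.support, ∑ j ∈ g.support,
      f.coeff k * conj (sigmaCoeff d ε j * g.coeff j) * mixedMoment ρ k j := by
  simp_rw [genPairing, sigmaMap_eq_sum hd]
  exact integral_eval_mul_conj_sum_mul hI f _ _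

open Real in
lemma CondII.comp_exp_two_pi_I_div_mul {d : ℕ} {ρ : ℂ → ℂ} (hII : CondII d ρ) (hd : d ≠ 0)
    (z : ℂ) : ρ (exp (2 * π * I / d) * z) = ρ z := by
  set η := exp (π * I / d)
  have hη : η ^ d = -1 := by
    rw [← Complex.exp_nat_mul, mul_div_cancel₀ _ (by exact_mod_cast hd), exp_pi_mul_I]
  have hηη : exp (2 * π * I / d) = η * η := by
    rw [← Complex.exp_add]
    ring_nf
  rw [hηη, mul_assoc, hII η hη, hII η hη, conj_conj]

section RootOfMinusOne

variable {d : ℕ} {ε : ℂ}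

lemma norm_eq_one_of_pow_eq_neg_one (hd : d ≠ 0) (hε : ε ^ d = -1) : ‖ε‖ = 1 :=
  norm_eq_one_of_pow_eq_one (n := d * 2) (by rw [pow_mul, hε]; norm_num) (by omega)

lemma conj_sigmaCoeff (hd : d ≠ 0) (hε : ε ^ d = -1) {k j : ℕ} (hkj : k ≡ j [MOD d]) :
    conj (sigmaCoeff d ε j) = sigmaCoeff d ε k * conj ε ^ k * ε ^ j := by
  have hε1 := norm_eq_one_of_pow_eq_neg_one hd hε
  have hε0 : ε ≠ 0 := by rintro rfl; simp at hε1
  have hsq : (ε ^ 2) ^ j = (ε ^ 2) ^ (j % d) :=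
    pow_eq_pow_mod j (by rw [← pow_mul, mul_comm, pow_mul, hε]; norm_num)
  rw [sigmaCoeff, sigmaCoeff, hkj, map_mul, map_zpow₀, map_pow, map_neg, ← inv_eq_conj hε1,
    ← inv_neg]
  simp only [zpow_neg, zpow_natCast, inv_pow, inv_inv]
  have hu : (-ε) ^ (j % d) ≠ 0 := pow_ne_zero _ (neg_ne_zero.mpr hε0)
  field_simp
  rw [pow_right_comm, pow_right_comm ε, hsq, neg_sq]

lemma conj_sigmaCoeff_mul_mixedMoment (hd : d ≠ 0) {ρ : ℂ → ℂ} (hII : CondII d ρ)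
    (hε : ε ^ d = -1) (k j : ℕ) :
    conj (sigmaCoeff d ε j) * mixedMoment ρ k j
      = sigmaCoeff d ε k * conj (mixedMoment ρ j k) := by
  by_cases hkj : k ≡ j [MOD d]
  · have hconj : (fun z => conj (ρ z)) = fun z => ρ (ε * z) :=
      funext fun z => (hII ε hε z).symm
    rw [conj_mixedMoment, hconj, mixedMoment_comp_mul (norm_eq_one_of_pow_eq_neg_one hd hε),
      conj_sigmaCoeff hd hε hkj]
    ring
  · have hrot := hII.comp_exp_two_pi_I_div_mul hd
    have hprim := isPrimitiveRoot_exp d hd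
    rw [mixedMoment_eq_zero_of_not_modEq hd hprim hrot hkj,
      mixedMoment_eq_zero_of_not_modEq hd hprim hrot (fun h => hkj h.symm)]
    simp

end RootOfMinusOne

theorem stmt_8_general (d : ℕ) (ρ : ℂ → ℂ) (hI : CondI ρ) (hII : CondII d ρ)
    (ε : ℂ) (hε : ε ^ d = -1) :
    (∀ f g : Polynomial ℂ,
      genPairing d ε ρ f g = (starRingEnd ℂ) (genPairing d ε ρ g f)) ∧
    (∀ f : Polynomial ℂ, ∃ r : ℝ, genPairing d ε ρ f f = (r : ℂ)) := by
  have hd : d ≠ 0 := by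
    rintro rfl
    norm_num at hε
  have hsymm : ∀ f g : ℂ[X], genPairing d ε ρ f g = conj (genPairing d ε ρ g f) := by
    intro f g
    rw [genPairing_eq_sum hd ε hI, genPairing_eq_sum hd ε hI, map_sum, Finset.sum_comm]
    refine Finset.sum_congr rfl fun j _ => ?_
    rw [map_sum]
    refine Finset.sum_congr rfl fun k _ => ?_
    simp only [map_mul, conj_conj]
    linear_combination f.coeff k * conj (g.coeff j) *
      conj_sigmaCoeff_mul_mixedMoment hd hII hε k j
  exact ⟨hsymm, fun f => conj_eq_iff_real.mp (hsymm f f).symm⟩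

theorem stmt_8 (d : ℕ) (hd : 1 ≤ d) (ρ : ℂ → ℂ) (hI : CondI ρ) (hII : CondII d ρ)
    (ε : ℂ) (hε : ε ^ d = -1) :
    (∀ f g : Polynomial ℂ,
      genPairing d ε ρ f g = (starRingEnd ℂ) (genPairing d ε ρ g f)) ∧
    (∀ f : Polynomial ℂ, ∃ r : ℝ, genPairing d ε ρ f f = (r : ℂ)) :=
  stmt_8_general d ρ hI hII ε hε
end

section
/- Let d ≥ 1 and let ρ satisfy conditions (I) and (II). For ε ∈ ℂ with ε^d = −1 define the pairing ⟨f,g⟩_ε = ∫_ℂ f(z)·conj(σ_ε g(z))·ρ(z) dx dy, where σ_ε g(z) = Σ_{ℓ=0}^{d−1} (−ε)^{−ℓ}·g_ℓ(ε·z). Then the pairing is independent of the choice of ε: if ε₁^d = −1 and ε₂^d = −1, then ⟨f,g⟩_{ε₁} = ⟨f,g⟩_{ε₂} for all complex polynomials f, g. -/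
open MeasureTheory Polynomial Complex

/- Writing `k = d q + ℓ` with `ℓ = k mod d`, the factor `(-ε)^{-ℓ}` in `σ_ε` exactly cancels the
`ε`-dependence of the monomial `(ε z)^k`, because `ε^k = (-1)^q ε^ℓ`. So `σ_ε g` is the same function
for every `ε` with `ε^d = -1`, and the pairing cannot depend on `ε` either. -/

lemma neg_zpow_neg_mod_mul_pow {K : Type*} [Field K] {d : ℕ} {ε : K} (hε : ε ^ d = -1)
    (hε0 : ε ≠ 0) (k : ℕ) :
    (-ε) ^ (-((k % d : ℕ) : ℤ)) * ε ^ k = (-1) ^ (k % d + k / d) := by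
  have hεk : ε ^ k = (-1) ^ (k / d) * ε ^ (k % d) := by
    conv_lhs => rw [← Nat.div_add_mod k d, pow_add, pow_mul, hε]
  have hsign : ((-1 : K) ^ (k % d))⁻¹ = (-1) ^ (k % d) := by
    rw [← inv_pow, inv_neg_one]
  rw [zpow_neg, zpow_natCast, neg_pow, mul_inv, hsign, hεk, pow_add]
  field_simp

lemma sigmaMap_eq_sum_support {d : ℕ} {ε : ℂ} (hε : ε ^ d = -1) (g : ℂ[X]) (z : ℂ) :
    sigmaMap d ε g z = ∑ k ∈ g.support, (-1) ^ (k % d + k / d) * (g.coeff k * z ^ k) := by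
  have hd : d ≠ 0 := by rintro rfl; norm_num at hε
  have hε0 : ε ≠ 0 := by rintro rfl; simp [zero_pow hd] at hε
  unfold sigmaMap weightComp
  simp only [eval_finsetSum, eval_monomial, Finset.mul_sum]
  rw [← Finset.sum_fiberwise_of_maps_to (g := (· % d)) (t := Finset.range d)
    (fun k _ => Finset.mem_range.mpr (Nat.mod_lt _ (Nat.pos_of_ne_zero hd)))
    (fun k => (-1) ^ (k % d + k / d) * (g.coeff k * z ^ k))]
  refine Finset.sum_congr rfl fun ℓ _ => Finset.sum_congr rfl fun k hk => ?_
  rw [← (Finset.mem_filter.mp hk).2, mul_pow]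
  linear_combination (g.coeff k * z ^ k) * neg_zpow_neg_mod_mul_pow hε hε0 k

lemma sigmaMap_eq_of_pow_eq_neg_one {d : ℕ} {ε₁ ε₂ : ℂ} (hε₁ : ε₁ ^ d = -1)
    (hε₂ : ε₂ ^ d = -1) (g : ℂ[X]) : sigmaMap d ε₁ g = sigmaMap d ε₂ g := by
  ext z
  rw [sigmaMap_eq_sum_support hε₁, sigmaMap_eq_sum_support hε₂]

theorem stmt_9_general (d : ℕ) (ρ : ℂ → ℂ)
    (ε₁ ε₂ : ℂ) (hε₁ : ε₁ ^ d = -1) (hε₂ : ε₂ ^ d = -1) :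
    ∀ f g : Polynomial ℂ, genPairing d ε₁ ρ f g = genPairing d ε₂ ρ f g := by
  intro f g
  rw [genPairing, genPairing, sigmaMap_eq_of_pow_eq_neg_one hε₁ hε₂]

theorem stmt_9 (d : ℕ) (hd : 1 ≤ d) (ρ : ℂ → ℂ) (hI : CondI ρ) (hII : CondII d ρ)
    (ε₁ ε₂ : ℂ) (hε₁ : ε₁ ^ d = -1) (hε₂ : ε₂ ^ d = -1) :
    ∀ f g : Polynomial ℂ, genPairing d ε₁ ρ f g = genPairing d ε₂ ρ f g :=
  stmt_9_general d ρ ε₁ ε₂ hε₁ hε₂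
end

section
/- Let d ≥ 1 and let ρ satisfy conditions (I) and (II). Fix ε ∈ ℂ with ε^d = −1 and define the pairing ⟨f,g⟩ = ∫_ℂ f(z)·conj(σg(z))·ρ(z) dx dy, where σg(z) = Σ_{ℓ=0}^{d−1} (−ε)^{−ℓ}·g_ℓ(ε·z). Then the pairing is invariant under the action of d-th roots of unity: for every ζ ∈ ℂ with ζ^d = 1 and all complex polynomials f, g, one has ⟨f(ζ·z), g(ζ·z)⟩ = ⟨f,g⟩. -/
open MeasureTheory Polynomial Complex

/-!
Substituting `ζ z` commutes with taking weight components, so `σ(g(ζ ·)) = (σg)(ζ ·)`. Since `εζ`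
is again a `d`-th root of `-1`, condition (II) gives `conj ρ(ζ z) = ρ(εζ z) = conj ρ(z)`, so `ρ` is
invariant under `z ↦ ζ z` as well. The rotated pairing is thus the integral of the original
integrand composed with the rotation `z ↦ ζ z`, which preserves Lebesgue measure as `|ζ| = 1`.
-/

lemma coeff_weightComp (d ℓ : ℕ) (g : ℂ[X]) (k : ℕ) :
    (weightComp d ℓ g).coeff k = if k % d = ℓ then g.coeff k else 0 := by
  simp only [weightComp, finsetSum_coeff, coeff_monomial, Finset.sum_ite_eq', Finset.mem_filter,
    mem_support_iff]
  split_ifs <;> simp_all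

lemma weightComp_comp_C_mul_X (d ℓ : ℕ) (ζ : ℂ) (g : ℂ[X]) :
    weightComp d ℓ (g.comp (C ζ * X)) = (weightComp d ℓ g).comp (C ζ * X) := by
  ext k
  simp only [coeff_weightComp, comp_C_mul_X_coeff]
  split_ifs <;> simp

lemma sigmaMap_comp_C_mul_X (d : ℕ) (ε ζ : ℂ) (g : ℂ[X]) (z : ℂ) :
    sigmaMap d ε (g.comp (C ζ * X)) z = sigmaMap d ε g (ζ * z) := by
  refine Finset.sum_congr rfl fun ℓ _ => ?_
  simp only [weightComp_comp_C_mul_X, eval_comp, eval_mul, eval_C, eval_X, mul_left_comm]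

lemma CondII.apply_mul_of_pow_eq_one {d : ℕ} {ρ : ℂ → ℂ} (hII : CondII d ρ) {ε ζ : ℂ}
    (hε : ε ^ d = -1) (hζ : ζ ^ d = 1) (z : ℂ) : ρ (ζ * z) = ρ z := by
  have hεζ : (ε * ζ) ^ d = -1 := by rw [mul_pow, hε, hζ, mul_one]
  apply (starRingEnd ℂ).injective
  rw [← hII ε hε, ← hII (ε * ζ) hεζ, mul_assoc]

lemma integral_comp_mul_left_of_norm_eq_one {E : Type*} [NormedAddCommGroup E]
    [NormedSpace ℝ E] (f : ℂ → E) {ζ : ℂ} (hζ : ‖ζ‖ = 1) :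
    ∫ z, f (ζ * z) = ∫ z, f z :=
  integral_comp (rotation ⟨ζ, mem_sphere_zero_iff_norm.2 hζ⟩) f

theorem stmt_10_general (d : ℕ) (hd : 1 ≤ d) (ρ : ℂ → ℂ) (hII : CondII d ρ)
    (ε : ℂ) (hε : ε ^ d = -1) :
    ∀ ζ : ℂ, ζ ^ d = 1 → ∀ f g : Polynomial ℂ,
      genPairing d ε ρ (f.comp (C ζ * X)) (g.comp (C ζ * X)) = genPairing d ε ρ f g := by
  intro ζ hζ f g
  have hρ (z : ℂ) : ρ (ζ * z) = ρ z := hII.apply_mul_of_pow_eq_one hε hζ z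
  have hζ_norm : ‖ζ‖ = 1 := norm_eq_one_of_pow_eq_one hζ (by omega)
  unfold genPairing
  conv_rhs => rw [← integral_comp_mul_left_of_norm_eq_one _ hζ_norm]
  refine integral_congr_ae (.of_forall fun z => ?_)
  simp only [sigmaMap_comp_C_mul_X, eval_comp, eval_mul, eval_C, eval_X, hρ]

theorem stmt_10 (d : ℕ) (hd : 1 ≤ d) (ρ : ℂ → ℂ) (hI : CondI ρ) (hII : CondII d ρ)
    (ε : ℂ) (hε : ε ^ d = -1) :
    ∀ ζ : ℂ, ζ ^ d = 1 → ∀ f g : Polynomial ℂ,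
      genPairing d ε ρ (f.comp (C ζ * X)) (g.comp (C ζ * X)) = genPairing d ε ρ f g :=
  stmt_10_general d hd ρ hII ε hε
end

section
/- For every integer d ≥ 1 and every a > 0 one has ∫_ℂ exp(−a|z|² + (i/d)·(z^d + conj(z)^d)) dx dy = π·∫_0^∞ exp(−a·t)·J₀(2·t^{d/2}/d) dt, where J₀(x) = (1/π)·∫_0^π cos(x·sin θ) dθ is the Bessel function of the first kind of order zero. -/
/-!
In polar coordinates `z = r e^{iθ}` one has `z^d + z̄^d = 2 r^d cos (dθ)`, so the integrand is
`e^{-a r²} e^{i c cos (dθ)}` with `c = 2 r^d / d`. As `θ` runs over `(-π, π)`, `dθ` runs over `d`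
periods of the integrand, so the angular integral is `∫_{-π}^{π} e^{i c cos θ} dθ = 2π J₀(c)`.
The substitution `t = r²` then turns the radial integral into the right-hand side.
-/

open MeasureTheory Complex

/-- The Bessel function of the first kind of order zero,
`J₀(x) = (1/π) ∫_0^π cos(x sin θ) dθ`. -/
noncomputable def besselJ0 (x : ℝ) : ℝ :=
  (1 / Real.pi) * ∫ θ in (0 : ℝ)..Real.pi, Real.cos (x * Real.sin θ)

open Real Set intervalIntegral ComplexConjugate

theorem Function.Periodic.intervalIntegral_comp_natCast_mul {E : Type*} [NormedAddCommGroup E]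
    [NormedSpace ℝ E] {g : ℝ → E} {T : ℝ} (hg : Function.Periodic g T)
    (hg_int : ∀ a b, IntervalIntegrable g volume a b) {n : ℕ} (hn : n ≠ 0) (t : ℝ) :
    ∫ x in t..t + T, g (n * x) = ∫ x in t..t + T, g x := by
  have hn' : (n : ℝ) ≠ 0 := Nat.cast_ne_zero.2 hn
  have h := hg.intervalIntegral_add_zsmul_eq n (n * t) hg_int
  rw [zsmul_eq_mul, Int.cast_natCast, ← Int.cast_smul_eq_zsmul ℝ, Int.cast_natCast,
    hg.intervalIntegral_add_eq _ t] at h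
  rw [integral_comp_mul_left g hn', mul_add, h, inv_smul_smul₀ hn']

theorem integral_cexp_mul_cos_mul_I (c : ℝ) :
    ∫ θ in -π..π, cexp (c * Real.cos θ * I) = 2 * π * besselJ0 c := by
  set f : ℝ → ℂ := fun u => cexp (c * Real.sin u * I)
  have hf : Continuous f := by fun_prop
  have hf_per : Function.Periodic f (2 * π) := fun u => by simp only [f, Real.sin_add_two_pi]
  have h_shift : ∫ θ in -π..π, cexp (c * Real.cos θ * I) = ∫ u in -π..π, f u := by
    calc ∫ θ in -π..π, cexp (c * Real.cos θ * I) = ∫ θ in -π..π, f (θ + π / 2) := by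
          simp only [f, Real.sin_add_pi_div_two]
      _ = ∫ u in -π..π, f u := by
          rw [integral_comp_add_right, show π + π / 2 = (-π + π / 2) + 2 * π by ring,
            hf_per.intervalIntegral_add_eq _ (-π), show -π + 2 * π = π by ring]
  have h_fold : ∫ u in -π..π, f u = ∫ u in 0..π, (f u + f (-u)) := by
    have hf_neg : IntervalIntegrable (fun u => f (-u)) volume 0 π :=
      (hf.comp continuous_neg).intervalIntegrable _ _
    rw [← integral_add_adjacent_intervals (hf.intervalIntegrable _ 0) (hf.intervalIntegrable 0 _),
      intervalIntegral.integral_add (hf.intervalIntegrable _ _) hf_neg, integral_comp_neg,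
      neg_zero, add_comm]
  have h_cos : ∀ u, f u + f (-u) = 2 * Real.cos (c * Real.sin u) := fun u => by
    simp only [f, Real.sin_neg, ofReal_cos, ofReal_mul, ofReal_neg, two_cos]
    ring_nf
  rw [h_shift, h_fold]
  simp_rw [h_cos]
  rw [intervalIntegral.integral_const_mul, intervalIntegral.integral_ofReal, besselJ0]
  push_cast
  field_simp

theorem integral_cexp_mul_cos_natCast_mul_mul_I (c : ℝ) {n : ℕ} (hn : n ≠ 0) :
    ∫ θ in -π..π, cexp (c * Real.cos (n * θ) * I) = 2 * π * besselJ0 c := by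
  set g : ℝ → ℂ := fun u => cexp (c * Real.cos u * I)
  have hg_per : Function.Periodic g (2 * π) := fun u => by simp only [g, Real.cos_add_two_pi]
  have h := hg_per.intervalIntegral_comp_natCast_mul
    (fun a b => (by fun_prop : Continuous g).intervalIntegrable a b) hn (-π)
  rw [show -π + 2 * π = π by ring] at h
  exact h.trans (integral_cexp_mul_cos_mul_I c)

theorem integral_Ioi_two_mul_smul_comp_sq {E : Type*} [NormedAddCommGroup E] [NormedSpace ℝ E]
    (f : ℝ → E) : ∫ r in Ioi 0, (2 * r) • f (r ^ 2) = ∫ t in Ioi 0, f t := by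
  refine Eq.trans ?_ (integral_comp_rpow_Ioi_of_pos two_pos)
  refine setIntegral_congr_fun measurableSet_Ioi fun r _ => ?_
  norm_num

theorem Complex.re_polarCoord_symm_pow (r θ : ℝ) (n : ℕ) :
    (Complex.polarCoord.symm (r, θ) ^ n).re = r ^ n * Real.cos (n * θ) := by
  rw [Complex.polarCoord_symm_apply, mul_pow, ofReal_cos, ofReal_sin, cos_add_sin_mul_I_pow,
    ← ofReal_pow, re_ofReal_mul, ← ofReal_natCast, ← ofReal_mul, ← ofReal_cos, ← ofReal_sin,
    add_re, ofReal_re, re_ofReal_mul, I_re, mul_zero, add_zero]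

theorem Complex.continuous_polarCoord_symm : Continuous Complex.polarCoord.symm := by
  simp only [funext Complex.polarCoord_symm_apply]
  fun_prop

theorem Complex.integrableOn_polarCoord_target_of_norm_le {E : Type*} [NormedAddCommGroup E]
    [NormedSpace ℝ E] {f : ℂ → E} (hf : Continuous f) {g : ℝ → ℝ}
    (hg : IntegrableOn (fun r => r * g r) (Ioi 0)) (hfg : ∀ z, ‖f z‖ ≤ g ‖z‖) :
    IntegrableOn (fun p : ℝ × ℝ => p.1 • f (Complex.polarCoord.symm p))
      Complex.polarCoord.target := by
  have h_bound : IntegrableOn (fun p : ℝ × ℝ => p.1 * g p.1) Complex.polarCoord.target := by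
    have h_const : IntegrableOn (fun _ : ℝ => (1 : ℝ)) (Ioo (-π) π) :=
      integrableOn_const measure_Ioo_lt_top.ne
    rw [Complex.polarCoord_target, IntegrableOn, Measure.volume_eq_prod, ← Measure.prod_restrict]
    simpa using hg.mul_prod h_const
  refine h_bound.mono' ?_ ?_
  · exact (continuous_fst.smul (hf.comp Complex.continuous_polarCoord_symm)).aestronglyMeasurable
  filter_upwards [ae_restrict_mem Complex.polarCoord.open_target.measurableSet] with p hp
  have hr : 0 < p.1 := hp.1
  rw [norm_smul, Real.norm_of_nonneg hr.le]
  gcongr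
  simpa [Complex.norm_polarCoord_symm, abs_of_pos hr] using hfg (Complex.polarCoord.symm p)

theorem Complex.integral_eq_integral_Ioi_smul_intervalIntegral {E : Type*} [NormedAddCommGroup E]
    [NormedSpace ℝ E] {f : ℂ → E}
    (hf : IntegrableOn (fun p : ℝ × ℝ => p.1 • f (Complex.polarCoord.symm p))
      Complex.polarCoord.target) :
    ∫ z, f z = ∫ r in Ioi 0, r • ∫ θ in -π..π, f (Complex.polarCoord.symm (r, θ)) := by
  rw [Complex.polarCoord_target, Measure.volume_eq_prod] at hf
  rw [← Complex.integral_comp_polarCoord_symm, polarCoord_target, Measure.volume_eq_prod,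
    setIntegral_prod _ hf]
  refine setIntegral_congr_fun measurableSet_Ioi fun r _ => ?_
  rw [MeasureTheory.integral_smul, integral_of_le (neg_le_self pi_pos.le),
    integral_Ioc_eq_integral_Ioo]

theorem stmt_18 (d : ℕ) (hd : 1 ≤ d) (a : ℝ) (ha : 0 < a) :
    ∫ z : ℂ, Complex.exp (-(a : ℂ) * (‖z‖ : ℂ) ^ 2 +
        (Complex.I / (d : ℂ)) * (z ^ d + (starRingEnd ℂ) z ^ d)) =
      (Real.pi : ℂ) * ∫ t in Set.Ioi (0 : ℝ),
        ((Real.exp (-a * t) * besselJ0 (2 * t ^ ((d : ℝ) / 2) / d) : ℝ) : ℂ) := by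
  set f : ℂ → ℂ := fun z => cexp (-(a : ℂ) * (‖z‖ : ℂ) ^ 2 + (I / d) * (z ^ d + conj z ^ d))
  have hf (z : ℂ) : f z = Real.exp (-a * ‖z‖ ^ 2) * cexp (↑(2 * (z ^ d).re / d) * I) := by
    simp only [f]
    rw [← map_pow, add_conj, ofReal_exp, ← Complex.exp_add]
    push_cast
    ring_nf
  have hf_int := Complex.integrableOn_polarCoord_target_of_norm_le (f := f)
    (g := fun r => Real.exp (-a * r ^ 2)) (by fun_prop)
    (by simpa using integrableOn_rpow_mul_exp_neg_mul_sq ha (s := 1) (by norm_num))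
    fun z => by
      rw [hf, norm_mul, norm_exp_ofReal_mul_I, mul_one, norm_real,
        Real.norm_of_nonneg (Real.exp_pos _).le]
  rw [Complex.integral_eq_integral_Ioi_smul_intervalIntegral hf_int]
  conv_rhs => rw [← integral_Ioi_two_mul_smul_comp_sq, ← MeasureTheory.integral_const_mul]
  refine setIntegral_congr_fun measurableSet_Ioi fun r (hr : 0 < r) => ?_
  have hf_polar (θ : ℝ) : f (Complex.polarCoord.symm (r, θ)) =
      Real.exp (-a * r ^ 2) * cexp (↑(2 * r ^ d / d) * ↑(Real.cos (d * θ)) * I) := by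
    rw [hf, Complex.norm_polarCoord_symm, sq_abs, Complex.re_polarCoord_symm_pow]
    push_cast
    ring_nf
  simp_rw [hf_polar]
  rw [intervalIntegral.integral_const_mul,
    integral_cexp_mul_cos_natCast_mul_mul_I _ (by omega : d ≠ 0),
    Real.rpow_div_two_eq_sqrt _ (sq_nonneg r), Real.sqrt_sq hr.le, Real.rpow_natCast]
  simp only [real_smul]
  push_cast
  ring
end

section
/- Let d ≥ 2 be an integer, ε > 0, and let (w_n)_{n≥0} be nonnegative reals; set v_n = w_n² for n ≥ 0 and v_n = 0 for n < 0, and assume that for all n ≥ 0 the recurrence v_n + Σ_{j=0}^{d−2} Π_{k=0}^{d−2} v_{n+j−k} = (n+1)·ε holds. Let W and W* be the linear operators on the space of finitely supported sequences ℕ → ℂ with standard basis (e_n)_{n≥0} defined by W·e_n = w_n·e_{n+1} for n ≥ 0, W*·e_0 = 0 and W*·e_{n+1} = w_n·e_n for n ≥ 0. Then the operator identity [W*, W] + [(W*)^{d−1}, W^{d−1}] = ε·Id holds, where [A,B] = AB − BA. -/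
open Finset

lemma reflZ (f : ℤ → ℝ) (m : ℕ) (a : ℤ) :
    ∏ k ∈ range m, f (a + (m - 1) - k) = ∏ k ∈ range m, f (a + k) := by
  rw [← Finset.prod_range_reflect fun k => f (a + k)]
  refine Finset.prod_congr rfl fun k hk => ?_
  simp only [Finset.mem_range] at hk
  congr 1
  omega

lemma keyrec (ε : ℝ) (v : ℤ → ℝ) (m : ℕ) (hm : 1 ≤ m)
    (hvneg : ∀ n : ℤ, n < 0 → v n = 0)
    (hrec : ∀ n : ℕ, v n + ∑ j ∈ range m, ∏ k ∈ range m, v ((n:ℤ)+j-k) = ((n:ℝ)+1)*ε) :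
    ∀ n : ℕ, v n - v ((n:ℤ)-1) + (∏ k ∈ range m, v ((n:ℤ)+k))
      - ∏ k ∈ range m, v ((n:ℤ)-1-k) = ε := by
  intro n
  cases n with
  | zero =>
    have h0 := hrec 0
    have hsum : ∑ j ∈ range m, ∏ k ∈ range m, v (((0:ℕ):ℤ)+j-k)
        = ∏ k ∈ range m, v (((0:ℕ):ℤ)+k) := by
      rw [Finset.sum_eq_single (m-1)]
      · calc ∏ k ∈ range m, v (((0:ℕ):ℤ)+(m-1:ℕ)-k)
            = ∏ k ∈ range m, v ((0:ℤ) + ((m:ℤ)-1) - k) :=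
              Finset.prod_congr rfl fun k hk => by congr 1; omega
          _ = ∏ k ∈ range m, v ((0:ℤ) + k) := reflZ v m 0
          _ = ∏ k ∈ range m, v (((0:ℕ):ℤ)+k) :=
              Finset.prod_congr rfl fun k hk => by congr 1
      · intro j hj hne
        simp only [Finset.mem_range] at hj
        exact Finset.prod_eq_zero (Finset.mem_range.mpr (by omega : m - 1 < m))
          (hvneg _ (by omega))
      · intro h
        exact absurd (Finset.mem_range.mpr (by omega)) h
    rw [hsum] at h0
    have z1 : v (((0:ℕ):ℤ)-1) = 0 := hvneg _ (by norm_num)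
    have z2 : ∏ k ∈ range m, v (((0:ℕ):ℤ)-1-k) = 0 :=
      Finset.prod_eq_zero (Finset.mem_range.mpr hm) (hvneg _ (by omega))
    rw [z1, z2]
    push_cast at h0 ⊢
    linarith
  | succ p =>
    have h1 := hrec (p+1)
    have h0 := hrec p
    set f : ℕ → ℝ := fun j => ∏ k ∈ range m, v ((p:ℤ)+j-k) with hf
    have h1' : ∑ j ∈ range m, ∏ k ∈ range m, v (((p+1:ℕ):ℤ)+j-k) = ∑ j ∈ range m, f (j+1) :=
      Finset.sum_congr rfl fun j _ => Finset.prod_congr rfl fun k _ => by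
        show v _ = v _; congr 1; omega
    rw [h1'] at h1
    have tele : ∑ j ∈ range m, f (j+1) = (∑ j ∈ range m, f j) + f m - f 0 := by
      have t1 := Finset.sum_range_succ' f m
      have t2 := Finset.sum_range_succ f m
      linarith
    have hfm : f m = ∏ k ∈ range m, v (((p+1:ℕ):ℤ)+k) := by
      calc f m = ∏ k ∈ range m, v (((p:ℤ)+1) + ((m:ℤ)-1) - k) :=
            Finset.prod_congr rfl fun k hk => by show v _ = v _; congr 1; omega
        _ = ∏ k ∈ range m, v (((p:ℤ)+1) + k) := reflZ v m ((p:ℤ)+1)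
        _ = ∏ k ∈ range m, v (((p+1:ℕ):ℤ)+k) :=
            Finset.prod_congr rfl fun k hk => by congr 1
    have hf0 : f 0 = ∏ k ∈ range m, v (((p+1:ℕ):ℤ)-1-k) :=
      Finset.prod_congr rfl fun k hk => by show v _ = v _; congr 1; omega
    have hvp : v (((p+1:ℕ):ℤ)-1) = v p := by congr 1; omega
    rw [hvp, ← hfm, ← hf0]
    push_cast at h0 h1 ⊢
    linarith

lemma Wpow (w : ℕ → ℝ) (W : Module.End ℂ (ℕ →₀ ℂ))
    (hW : ∀ n : ℕ, W (Finsupp.single n 1) = (w n : ℂ) • Finsupp.single (n + 1) 1) :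
    ∀ M n, (W ^ M) (Finsupp.single n 1)
      = (∏ k ∈ range M, (w (n+k) : ℂ)) • Finsupp.single (n+M) 1 := by
  intro M
  induction M with
  | zero => intro n; simp
  | succ M ih =>
    intro n
    rw [pow_succ', Module.End.mul_apply, ih n, map_smul, hW, smul_smul,
      Finset.prod_range_succ, mul_comm]
    rfl

lemma Wdpow (w : ℕ → ℝ) (Wd : Module.End ℂ (ℕ →₀ ℂ))
    (hWd : ∀ n : ℕ, Wd (Finsupp.single (n + 1) 1) = (w n : ℂ) • Finsupp.single n 1) :
    ∀ M n, (Wd ^ M) (Finsupp.single (n+M) 1)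
      = (∏ k ∈ range M, (w (n+k) : ℂ)) • Finsupp.single n 1 := by
  intro M
  induction M with
  | zero => intro n; simp
  | succ M ih =>
    intro n
    have : n + (M+1) = (n + M) + 1 := rfl
    rw [this, pow_succ, Module.End.mul_apply, hWd (n+M), map_smul, ih n, smul_smul,
      Finset.prod_range_succ, mul_comm]

lemma Wdpow0 (Wd : Module.End ℂ (ℕ →₀ ℂ))
    (hWd0 : Wd (Finsupp.single 0 1) = 0)
    (h1 : ∀ n : ℕ, ∃ c : ℂ, Wd (Finsupp.single (n + 1) 1) = c • Finsupp.single n 1) :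
    ∀ M n, n < M → (Wd ^ M) (Finsupp.single n 1) = 0 := by
  intro M
  induction M with
  | zero => omega
  | succ M ih =>
    intro n hn
    rw [pow_succ, Module.End.mul_apply]
    cases n with
    | zero => rw [hWd0, map_zero]
    | succ p =>
      obtain ⟨c, hc⟩ := h1 p
      rw [hc, map_smul, ih p (by omega), smul_zero]

theorem stmt_19 (d : ℕ) (hd : 2 ≤ d) (ε : ℝ) (hε : 0 < ε)
    (w : ℕ → ℝ) (hw : ∀ n, 0 ≤ w n)
    (v : ℤ → ℝ) (hv : ∀ n : ℕ, v n = w n ^ 2) (hvneg : ∀ n : ℤ, n < 0 → v n = 0)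
    (hrec : ∀ n : ℕ, v n + ∑ j ∈ Finset.range (d - 1), ∏ k ∈ Finset.range (d - 1),
        v ((n : ℤ) + j - k) = ((n : ℝ) + 1) * ε)
    (W Wd : Module.End ℂ (ℕ →₀ ℂ))
    (hW : ∀ n : ℕ, W (Finsupp.single n 1) = (w n : ℂ) • Finsupp.single (n + 1) 1)
    (hWd0 : Wd (Finsupp.single 0 1) = 0)
    (hWd : ∀ n : ℕ, Wd (Finsupp.single (n + 1) 1) = (w n : ℂ) • Finsupp.single n 1) :
    (Wd * W - W * Wd) + (Wd ^ (d - 1) * W ^ (d - 1) - W ^ (d - 1) * Wd ^ (d - 1)) =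
      (ε : ℂ) • (1 : Module.End ℂ (ℕ →₀ ℂ)) := by
  set m := d - 1 with hmdef
  have hm : 1 ≤ m := by omega
  have key := keyrec ε v m hm hvneg hrec
  have Wp := Wpow w W hW
  have Wdp := Wdpow w Wd hWd
  have Wdp0 := Wdpow0 Wd hWd0 (fun n => ⟨(w n : ℂ), hWd n⟩)
  -- helper to express the key identity in ℂ with w-products
  have ckey : ∀ n : ℕ,
      ((w n : ℂ) * (w n : ℂ)) - ((v ((n:ℤ)-1) : ℝ) : ℂ)
        + ((∏ k ∈ range m, (w (n+k) : ℂ)) * ∏ k ∈ range m, (w (n+k) : ℂ))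
        - ((∏ k ∈ range m, v ((n:ℤ)-1-k) : ℝ) : ℂ) = (ε : ℂ) := by
    intro n
    have hk := key n
    have hvn : v (n:ℤ) = w n * w n := by rw [hv n]; ring
    have hP : ∏ k ∈ range m, v ((n:ℤ)+k) = ∏ k ∈ range m, (w (n+k) * w (n+k)) := by
      refine Finset.prod_congr rfl fun k _ => ?_
      have : ((n:ℤ)+k) = ((n+k : ℕ) : ℤ) := by push_cast; ring
      rw [this, hv (n+k)]; ring
    rw [hvn, hP] at hk
    have : ((w n * w n - v ((n:ℤ)-1) + (∏ k ∈ range m, (w (n+k) * w (n+k)))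
        - ∏ k ∈ range m, v ((n:ℤ)-1-k) : ℝ) : ℂ) = ((ε : ℝ) : ℂ) := by
      exact_mod_cast congrArg (fun x : ℝ => (x : ℂ)) hk
    push_cast [Finset.prod_mul_distrib] at this
    push_cast [Finset.prod_mul_distrib]
    linear_combination this
  refine Finsupp.lhom_ext fun n b => ?_
  have hb : (Finsupp.single n b : ℕ →₀ ℂ) = b • Finsupp.single n 1 := by
    rw [Finsupp.smul_single, smul_eq_mul, mul_one]
  rw [hb, map_smul, map_smul]
  congr 1
  simp only [LinearMap.add_apply, LinearMap.sub_apply, Module.End.mul_apply,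
    LinearMap.smul_apply, Module.End.one_apply]
  have T1 : Wd (W (Finsupp.single n 1)) = ((w n : ℂ) * (w n : ℂ)) • Finsupp.single n 1 := by
    rw [hW n, map_smul, hWd n, smul_smul]
  have T3 : (Wd^m) ((W^m) (Finsupp.single n 1)) =
      ((∏ k ∈ range m, (w (n+k):ℂ)) * ∏ k ∈ range m, (w (n+k):ℂ)) • Finsupp.single n 1 := by
    rw [Wp m n, map_smul, Wdp m n, smul_smul]
  rw [T1, T3]
  have hck := ckey n
  rcases Nat.lt_or_ge n m with hnm | hnm
  · have T4 : (W^m) ((Wd^m) (Finsupp.single n 1)) = 0 := by rw [Wdp0 m n hnm, map_zero]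
    rw [T4, sub_zero]
    cases n with
    | zero =>
      rw [hWd0, map_zero, sub_zero, ← add_smul]
      have z1 : v (((0:ℕ):ℤ)-1) = 0 := hvneg _ (by norm_num)
      have z2 : ∏ k ∈ range m, v (((0:ℕ):ℤ)-1-k) = 0 :=
        Finset.prod_eq_zero (Finset.mem_range.mpr hm) (hvneg _ (by omega))
      rw [z1, z2] at hck
      push_cast at hck
      rw [show ((w 0:ℂ) * (w 0:ℂ)) + (∏ k ∈ range m, (w (0+k):ℂ)) * ∏ k ∈ range m, (w (0+k):ℂ)
        = (ε:ℂ) from by linear_combination hck]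
    | succ p =>
      rw [hWd p, map_smul, hW p, smul_smul, ← sub_smul, ← add_smul]
      have z1 : v (((p+1:ℕ):ℤ)-1) = w p * w p := by
        have : (((p+1:ℕ):ℤ)-1) = ((p:ℕ):ℤ) := by push_cast; ring
        rw [this, hv p]; ring
      have z2 : ∏ k ∈ range m, v (((p+1:ℕ):ℤ)-1-k) = 0 :=
        Finset.prod_eq_zero (Finset.mem_range.mpr hnm) (hvneg _ (by omega))
      rw [z1, z2] at hck
      push_cast at hck
      congr 1
      linear_combination hck
  · obtain ⟨q, rfl⟩ : ∃ q, n = q + m := ⟨n - m, by omega⟩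
    have T4 : (W^m) ((Wd^m) (Finsupp.single (q+m) 1)) =
        ((∏ k ∈ range m, (w (q+k):ℂ)) * ∏ k ∈ range m, (w (q+k):ℂ)) • Finsupp.single (q+m) 1 := by
      rw [Wdp m q, map_smul, Wp m q, smul_smul]
    rw [T4]
    obtain ⟨p, hp⟩ : ∃ p, q + m = p + 1 := ⟨q+m-1, by omega⟩
    have T2 : W (Wd (Finsupp.single (q+m) 1)) = ((w p:ℂ) * (w p:ℂ)) • Finsupp.single (q+m) 1 := by
      rw [hp, hWd p, map_smul, hW p, smul_smul]
    rw [T2, ← sub_smul, ← sub_smul, ← add_smul]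
    have z1 : v (((q+m:ℕ):ℤ)-1) = w p * w p := by
      have : (((q+m:ℕ):ℤ)-1) = ((p:ℕ):ℤ) := by push_cast; omega
      rw [this, hv p]; ring
    have z2 : ∏ k ∈ range m, v (((q+m:ℕ):ℤ)-1-k) = ∏ k ∈ range m, (w (q+k) * w (q+k)) := by
      calc ∏ k ∈ range m, v (((q+m:ℕ):ℤ)-1-k)
          = ∏ k ∈ range m, v ((q:ℤ) + ((m:ℤ)-1) - k) :=
            Finset.prod_congr rfl fun k _ => by congr 1; push_cast; ring
        _ = ∏ k ∈ range m, v ((q:ℤ) + k) := reflZ v m q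
        _ = ∏ k ∈ range m, (w (q+k) * w (q+k)) := by
            refine Finset.prod_congr rfl fun k _ => ?_
            have : ((q:ℤ)+k) = ((q+k : ℕ) : ℤ) := by push_cast; ring
            rw [this, hv (q+k)]; ring
    rw [z1, z2] at hck
    push_cast [Finset.prod_mul_distrib] at hck
    congr 1
    push_cast
    linear_combination hck
end
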